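/- In the greedy counterexample tree on n = k² vertices (a path of k−1 'spine' vertices u_{1,0},...,u_{k−1,0} together with v attached to u_{1,0}, each spine vertex u_{i,0} being the root of a path u_{i,1},...,u_{i,k}), the partition into parts P_i = {u_{i,1},...,u_{i,k}} for i ∈ [k−1] and P_k = {v, u_{1,0},...,u_{k−1,0}} has max_i δ(P_i) = k − 1, while there exists a partition of the vertices into k equal parts of size k each with max cut value at most 4. -/

import Mathlib

open Classical

/-- Vertices of the counterexample tree on `k²` vertices: `none` is the extra
vertex `v`, and `some (i, j)` is the vertex `u_{i+1, j}` (so `i` ranges over the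
`k-1` spines and `j` over `0, …, k`). -/
abbrev TreeV (k : ℕ) := Option (Fin (k - 1) × Fin (k + 1))

/-- Adjacency in the counterexample tree: `v` is adjacent to `u_{1,0}`; each
`u_{i,j}` is adjacent to `u_{i,j±1}`; consecutive spine vertices `u_{i,0}` and
`u_{i+1,0}` are adjacent. -/
def treeAdj (k : ℕ) (a b : TreeV k) : Prop :=
  match a, b with
  | none, none => False
  | none, some (i, j) => i.val = 0 ∧ j.val = 0
  | some (i, j), none => i.val = 0 ∧ j.val = 0
  | some (i, j), some (i', j') =>
      (i = i' ∧ (j'.val = j.val + 1 ∨ j.val = j'.val + 1)) ∨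
      (j.val = 0 ∧ j'.val = 0 ∧ (i'.val = i.val + 1 ∨ i.val = i'.val + 1))

/-- Unit edge weights on the counterexample tree. -/
noncomputable def treeW (k : ℕ) (a b : TreeV k) : ℝ :=
  if treeAdj k a b then 1 else 0

/-- The total weight of edges leaving the set `A`. -/
noncomputable def cutw {V : Type*} [Fintype V] [DecidableEq V]
    (w : V → V → ℝ) (A : Finset V) : ℝ :=
  ∑ u ∈ A, ∑ v ∈ Aᶜ, w u v

/-- The part `P_i = {u_{i,1}, …, u_{i,k}}` removed by the greedy algorithm. -/
noncomputable def pathPart (k : ℕ) (i : Fin (k - 1)) : Finset (TreeV k) :=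
  Finset.univ.filter (fun a : TreeV k =>
    match a with
    | some (i', j) => i' = i ∧ 1 ≤ j.val
    | none => False)

/-- The last part `{v, u_{1,0}, …, u_{k-1,0}}` left to the greedy algorithm. -/
noncomputable def spinePart (k : ℕ) : Finset (TreeV k) :=
  Finset.univ.filter (fun a : TreeV k =>
    match a with
    | some (_, j) => j.val = 0
    | none => True)

namespace S16

def idx (k : ℕ) : TreeV k → ℕ
  | none => 0
  | some (i, j) => i.val * (k + 1) + j.val + 1

lemma base (k i j i' j' : ℕ) (hj : j < k+1) (hj' : j' < k+1)
    (h : i*(k+1)+j = i'*(k+1)+j') : i = i' ∧ j = j' := by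
  have h1 : (i*(k+1)+j) / (k+1) = i := by
    rw [mul_comm, Nat.mul_add_div (by omega), Nat.div_eq_of_lt hj, Nat.add_zero]
  have h2 : (i'*(k+1)+j') / (k+1) = i' := by
    rw [mul_comm, Nat.mul_add_div (by omega), Nat.div_eq_of_lt hj', Nat.add_zero]
  have h3 : (i*(k+1)+j) % (k+1) = j := by
    rw [mul_comm, Nat.mul_add_mod, Nat.mod_eq_of_lt hj]
  have h4 : (i'*(k+1)+j') % (k+1) = j' := by
    rw [mul_comm, Nat.mul_add_mod, Nat.mod_eq_of_lt hj']
  rw [h] at h1 h3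
  constructor
  · rw [← h1, h2]
  · rw [← h3, h4]

lemma idx_inj (k : ℕ) : Function.Injective (idx k) := by
  rintro (_|⟨i,j⟩) (_|⟨i',j'⟩) h
  · rfl
  · exact absurd h (by simp [idx])
  · exact absurd h (by simp [idx])
  · simp only [idx, add_left_inj] at h
    obtain ⟨h1, h2⟩ := base k i.val j.val i'.val j'.val j.isLt j'.isLt h
    simp [Prod.ext_iff, Fin.ext_iff, h1, h2]

lemma idx_lt (k : ℕ) (hk : 2 ≤ k) (a : TreeV k) : idx k a < k * k := by
  obtain ⟨t, rfl⟩ : ∃ t, k = t + 2 := ⟨k - 2, by omega⟩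
  match a with
  | none =>
    show 0 < (t+2)*(t+2)
    positivity
  | some (i, j) =>
    have hi : i.val < t + 1 := by have := i.isLt; omega
    have hj : j.val < t + 3 := j.isLt
    show i.val * (t + 2 + 1) + j.val + 1 < (t+2)*(t+2)
    nlinarith

lemma mod_one (k i : ℕ) (hk : 2 ≤ k) : (i*(k+1)+0+1) % (k+1) = 1 := by
  have h : i*(k+1)+0+1 = (k+1)*i+1 := by ring
  rw [h, Nat.mul_add_mod, Nat.mod_eq_of_lt (by omega)]

lemma adj_rel {k : ℕ} (hk : 2 ≤ k) {a b : TreeV k} (h : treeAdj k a b) :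
    (idx k b = idx k a + 1) ∨ (idx k a = idx k b + 1) ∨
    (idx k b = idx k a + (k+1) ∧ idx k a % (k+1) = 1) ∨
    (idx k a = idx k b + (k+1) ∧ idx k a % (k+1) = 1) := by
  match a, b with
  | none, none => exact absurd h (by simp [treeAdj])
  | none, some (i,j) =>
    obtain ⟨h1, h2⟩ := h
    left; show i.val*(k+1)+j.val+1 = 0 + 1; rw [h1, h2]; ring
  | some (i,j), none =>
    obtain ⟨h1, h2⟩ := h
    right; left; show i.val*(k+1)+j.val+1 = 0 + 1; rw [h1, h2]; ring
  | some (i,j), some (i',j') =>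
    rcases h with ⟨rfl, hj | hj⟩ | ⟨hj0, hj0', hi | hi⟩
    · left
      show i.val*(k+1)+j'.val+1 = i.val*(k+1)+j.val+1 + 1
      omega
    · right; left
      show i.val*(k+1)+j.val+1 = i.val*(k+1)+j'.val+1 + 1
      omega
    · right; right; left
      constructor
      · show i'.val*(k+1)+j'.val+1 = i.val*(k+1)+j.val+1 + (k+1)
        rw [hi, hj0, hj0']; ring
      · show (i.val*(k+1)+j.val+1) % (k+1) = 1
        rw [hj0]; exact mod_one k i.val hk
    · right; right; right
      constructor
      · show i.val*(k+1)+j.val+1 = i'.val*(k+1)+j'.val+1 + (k+1)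
        rw [hi, hj0, hj0']; ring
      · show (i.val*(k+1)+j.val+1) % (k+1) = 1
        rw [hj0]; exact mod_one k i.val hk

lemma cutw_eq_card (k : ℕ) (A : Finset (TreeV k)) :
    cutw (treeW k) A = ((A ×ˢ Aᶜ).filter fun p => treeAdj k p.1 p.2).card := by
  unfold cutw treeW
  rw [← Finset.sum_product']
  simp [Finset.sum_boole]

lemma part1 {k : ℕ} (hk : 2 ≤ k) (i : Fin (k-1)) : cutw (treeW k) (pathPart k i) = 1 := by
  rw [cutw_eq_card]
  have hs : ((pathPart k i ×ˢ (pathPart k i)ᶜ).filter fun p => treeAdj k p.1 p.2)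
      = {((some (i, ⟨1, by omega⟩) : TreeV k), (some (i, ⟨0, by omega⟩) : TreeV k))} := by
    ext ⟨a, b⟩
    simp only [Finset.mem_filter, Finset.mem_product, Finset.mem_compl, Finset.mem_singleton,
      Prod.mk.injEq, pathPart, Finset.mem_univ, true_and]
    constructor
    · rintro ⟨⟨ha, hb⟩, hadj⟩
      rcases a with _ | ⟨i1, j1⟩
      · exact ha.elim
      rcases b with _ | ⟨i2, j2⟩
      · obtain ⟨hi1, hj1⟩ := ha
        obtain ⟨_, h0⟩ := hadj
        omega
      · obtain ⟨hi1, hj1⟩ := ha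
        subst hi1
        rcases hadj with ⟨rfl, hj | hj⟩ | ⟨h0, _, _⟩
        · exact absurd ⟨rfl, by omega⟩ hb
        · have hj2 : j2.val = 0 := by
            by_contra hc
            exact hb ⟨rfl, by omega⟩
          constructor
          · simp only [Option.some.injEq, Prod.mk.injEq, Fin.ext_iff]
            exact ⟨trivial, by omega⟩
          · simp only [Option.some.injEq, Prod.mk.injEq, Fin.ext_iff]
            exact ⟨trivial, by omega⟩
        · omega
    · rintro ⟨rfl, rfl⟩
      refine ⟨⟨?_, ?_⟩, ?_⟩
      · show i = i ∧ 1 ≤ (1 : ℕ)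
        exact ⟨rfl, le_refl 1⟩
      · show ¬(i = i ∧ 1 ≤ (0 : ℕ))
        rintro ⟨-, hc⟩
        omega
      · show (i = i ∧ ((0:ℕ) = 1 + 1 ∨ (1:ℕ) = 0 + 1)) ∨ _
        exact Or.inl ⟨rfl, Or.inr rfl⟩
  rw [hs, Finset.card_singleton, Nat.cast_one]

lemma part2 {k : ℕ} (hk : 2 ≤ k) : cutw (treeW k) (spinePart k) = (k : ℝ) - 1 := by
  rw [cutw_eq_card]
  have hinj : Function.Injective (fun i : Fin (k-1) =>
      ((some (i, ⟨0, by omega⟩) : TreeV k), (some (i, ⟨1, by omega⟩) : TreeV k))) := by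
    intro a b h
    simpa using congrArg Prod.fst h
  have hs : ((spinePart k ×ˢ (spinePart k)ᶜ).filter fun p => treeAdj k p.1 p.2)
      = Finset.image (fun i : Fin (k-1) =>
          ((some (i, ⟨0, by omega⟩) : TreeV k), (some (i, ⟨1, by omega⟩) : TreeV k)))
          Finset.univ := by
    ext ⟨a, b⟩
    simp only [Finset.mem_filter, Finset.mem_product, Finset.mem_compl, Finset.mem_image,
      Finset.mem_univ, true_and, spinePart, Prod.mk.injEq]
    constructor
    · rintro ⟨⟨ha, hb⟩, hadj⟩
      rcases a with _ | ⟨i1, j1⟩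
      · rcases b with _ | ⟨i2, j2⟩
        · exact hadj.elim
        · exact absurd hadj.2 hb
      rcases b with _ | ⟨i2, j2⟩
      · exact absurd trivial hb
      · rcases hadj with ⟨rfl, hj | hj⟩ | ⟨h0, h0', _⟩
        · refine ⟨i1, ?_, ?_⟩
          · simp only [Option.some.injEq, Prod.mk.injEq, Fin.ext_iff]
            exact ⟨trivial, by omega⟩
          · simp only [Option.some.injEq, Prod.mk.injEq, Fin.ext_iff]
            exact ⟨trivial, by omega⟩
        · have : (j1 : ℕ) = 0 := ha
          omega
        · exact absurd h0' hb
    · rintro ⟨i, h1, h2⟩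
      rw [← h1, ← h2]
      refine ⟨⟨?_, ?_⟩, ?_⟩
      · show (0 : ℕ) = 0
        rfl
      · show ¬((1 : ℕ) = 0)
        omega
      · show (i = i ∧ ((1:ℕ) = 0 + 1 ∨ (0:ℕ) = 1 + 1)) ∨ _
        exact Or.inl ⟨rfl, Or.inl rfl⟩
  rw [hs, Finset.card_image_of_injective _ hinj, Finset.card_univ, Fintype.card_fin,
    Nat.cast_sub (by omega), Nat.cast_one]

def Q (k : ℕ) (m : Fin k) : Finset (TreeV k) :=
  Finset.univ.filter (fun a => idx k a / k = m.val)

lemma mem_Q_iff {k : ℕ} (hk : 2 ≤ k) (m : Fin k) (a : TreeV k) :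
    a ∈ Q k m ↔ m.val * k ≤ idx k a ∧ idx k a < m.val * k + k := by
  rw [Q, Finset.mem_filter]
  simp only [Finset.mem_univ, true_and]
  constructor
  · intro h
    constructor
    · conv_lhs => rw [← h]
      exact Nat.div_mul_le_self _ _
    · have h2 : idx k a < (m.val + 1) * k :=
        (Nat.div_lt_iff_lt_mul (show 0 < k by omega)).1 (by omega)
      rw [add_mul, one_mul] at h2
      exact h2
  · rintro ⟨h1, h2⟩
    have hle : m.val ≤ idx k a / k := by
      rw [Nat.le_div_iff_mul_le (show 0 < k by omega)]
      exact h1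
    have hlt : idx k a / k < m.val + 1 := by
      rw [Nat.div_lt_iff_lt_mul (show 0 < k by omega), add_mul, one_mul]
      exact h2
    omega

lemma spine_unique {k M a b : ℕ} (hk : 2 ≤ k)
    (ha1 : M ≤ a) (ha2 : a < M + k) (hb1 : M ≤ b) (hb2 : b < M + k)
    (hma : a % (k+1) = 1) (hmb : b % (k+1) = 1) : a = b := by
  have hda := Nat.div_add_mod a (k+1)
  have hdb := Nat.div_add_mod b (k+1)
  rw [hma] at hda
  rw [hmb] at hdb
  rcases lt_trichotomy (a / (k+1)) (b / (k+1)) with h | h | h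
  · exfalso
    have h1 : (k+1) * (a/(k+1)) + (k+1) ≤ (k+1) * (b/(k+1)) := by
      have := Nat.mul_le_mul_left (k+1) (show a/(k+1) + 1 ≤ b/(k+1) by omega)
      rw [Nat.mul_add, Nat.mul_one] at this
      exact this
    omega
  · rw [h] at hda
    omega
  · exfalso
    have h1 : (k+1) * (b/(k+1)) + (k+1) ≤ (k+1) * (a/(k+1)) := by
      have := Nat.mul_le_mul_left (k+1) (show b/(k+1) + 1 ≤ a/(k+1) by omega)
      rw [Nat.mul_add, Nat.mul_one] at this
      exact this
    omega

lemma exists_idx {k : ℕ} (hk : 2 ≤ k) {n : ℕ} (h1 : 1 ≤ n) (h2 : n < k*k) :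
    ∃ a : TreeV k, idx k a = n := by
  have e : (k-1)*(k+1) + 1 = k*k := by
    obtain ⟨t, rfl⟩ : ∃ t, k = t+2 := ⟨k-2, by omega⟩
    have h : t + 2 - 1 = t + 1 := by omega
    rw [h]; ring
  have hq : (n-1)/(k+1) < k-1 := by
    rw [Nat.div_lt_iff_lt_mul (by omega)]
    omega
  have hr : (n-1) % (k+1) < k+1 := Nat.mod_lt _ (by omega)
  refine ⟨some (⟨(n-1)/(k+1), hq⟩, ⟨(n-1)%(k+1), hr⟩), ?_⟩
  show (n-1)/(k+1) * (k+1) + (n-1)%(k+1) + 1 = n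
  have hd := Nat.div_add_mod (n-1) (k+1)
  calc (n-1)/(k+1) * (k+1) + (n-1)%(k+1) + 1
      = ((k+1) * ((n-1)/(k+1)) + (n-1)%(k+1)) + 1 := by ring
    _ = (n-1) + 1 := by rw [hd]
    _ = n := by omega

lemma card_Q {k : ℕ} (hk : 2 ≤ k) (m : Fin k) : (Q k m).card = k := by
  have hc : (Q k m).card = (Finset.Ico (m.val*k) (m.val*k + k)).card := by
    apply Finset.card_nbij (idx k)
    · intro a ha
      rw [Finset.mem_coe, Finset.mem_Ico]
      exact (mem_Q_iff hk m a).1 ha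
    · exact (idx_inj k).injOn
    · intro n hn
      simp only [Finset.coe_Ico, Set.mem_Ico] at hn
      obtain ⟨h1, h2⟩ := hn
      have hnk : n < k*k := by
        have h3 : (m.val+1) * k ≤ k * k := Nat.mul_le_mul_right k (by omega)
        rw [add_mul, one_mul] at h3
        omega
      rcases Nat.eq_zero_or_pos n with rfl | hpos
      · refine ⟨none, ?_, rfl⟩
        rw [Finset.mem_coe, mem_Q_iff hk]
        simp only [idx]
        omega
      · obtain ⟨a, ha⟩ := exists_idx hk hpos hnk
        refine ⟨a, ?_, ha⟩
        rw [Finset.mem_coe, mem_Q_iff hk, ha]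
        exact ⟨h1, h2⟩
  rw [hc, Nat.card_Ico]
  omega

lemma disj_Q {k : ℕ} (m m' : Fin k) (h : m ≠ m') : Disjoint (Q k m) (Q k m') := by
  rw [Finset.disjoint_left]
  intro a ha ha'
  apply h
  apply Fin.ext
  have h1 : idx k a / k = m.val := (Finset.mem_filter.1 ha).2
  have h2 : idx k a / k = m'.val := (Finset.mem_filter.1 ha').2
  omega

lemma union_Q {k : ℕ} (hk : 2 ≤ k) : Finset.univ.biUnion (Q k) = Finset.univ := by
  apply Finset.eq_univ_of_forall
  intro a
  rw [Finset.mem_biUnion]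
  refine ⟨⟨idx k a / k, ?_⟩, Finset.mem_univ _, ?_⟩
  · exact (Nat.div_lt_iff_lt_mul (by omega)).2 (idx_lt k hk a)
  · rw [Q, Finset.mem_filter]
    exact ⟨Finset.mem_univ _, rfl⟩

lemma key {k M u v u' v' : ℕ} (hk : 2 ≤ k)
    (hu : M ≤ u ∧ u < M + k) (hv : ¬(M ≤ v ∧ v < M + k))
    (hu' : M ≤ u' ∧ u' < M + k) (hv' : ¬(M ≤ v' ∧ v' < M + k))
    (ru : v = u + 1 ∨ u = v + 1 ∨ (v = u + (k+1) ∧ u % (k+1) = 1) ∨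
      (u = v + (k+1) ∧ u % (k+1) = 1))
    (ru' : v' = u' + 1 ∨ u' = v' + 1 ∨ (v' = u' + (k+1) ∧ u' % (k+1) = 1) ∨
      (u' = v' + (k+1) ∧ u' % (k+1) = 1))
    (htag : (if v = u+1 then 0 else if u = v+1 then 1
        else if v = u+(k+1) then (2:ℕ) else 3) =
      (if v' = u'+1 then 0 else if u' = v'+1 then 1
        else if v' = u'+(k+1) then (2:ℕ) else 3)) :
    u = u' ∧ v = v' := by
  split_ifs at htag
  all_goals try omega
  · -- both tag 2
    have hm : u % (k+1) = 1 := by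
      rcases ru with h|h|⟨h,hm⟩|⟨h,hm⟩ <;> omega
    have hm' : u' % (k+1) = 1 := by
      rcases ru' with h|h|⟨h,hm⟩|⟨h,hm⟩ <;> omega
    have he := spine_unique hk hu.1 hu.2 hu'.1 hu'.2 hm hm'
    omega
  · -- both tag 3
    have h1 : u = v + (k+1) := by
      rcases ru with h|h|⟨h,hm⟩|⟨h,hm⟩ <;> omega
    have h1' : u' = v' + (k+1) := by
      rcases ru' with h|h|⟨h,hm⟩|⟨h,hm⟩ <;> omega
    have hm : u % (k+1) = 1 := by
      rcases ru with h|h|⟨h,hm⟩|⟨h,hm⟩ <;> omega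
    have hm' : u' % (k+1) = 1 := by
      rcases ru' with h|h|⟨h,hm⟩|⟨h,hm⟩ <;> omega
    have he := spine_unique hk hu.1 hu.2 hu'.1 hu'.2 hm hm'
    omega

lemma cut_le {k : ℕ} (hk : 2 ≤ k) (m : Fin k) : cutw (treeW k) (Q k m) ≤ 4 := by
  rw [cutw_eq_card]
  have hcard : ((Q k m ×ˢ (Q k m)ᶜ).filter fun p => treeAdj k p.1 p.2).card ≤ 4 := by
    have h4 : (Finset.range 4).card = 4 := Finset.card_range 4
    rw [← h4]
    apply Finset.card_le_card_of_injOn (fun p =>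
      if idx k p.2 = idx k p.1 + 1 then 0
      else if idx k p.1 = idx k p.2 + 1 then 1
      else if idx k p.2 = idx k p.1 + (k+1) then 2 else 3)
    · intro p _
      simp only [Finset.mem_coe, Finset.mem_range]
      split_ifs <;> omega
    · intro p hp p' hp' htag
      simp only [Finset.coe_filter, Set.mem_setOf_eq, Finset.mem_product,
        Finset.mem_compl] at hp hp'
      obtain ⟨⟨hu, hv⟩, hadj⟩ := hp
      obtain ⟨⟨hu', hv'⟩, hadj'⟩ := hp'
      rw [mem_Q_iff hk] at hu hu' hv hv'
      have ru := adj_rel hk hadj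
      have ru' := adj_rel hk hadj'
      have hkey := key hk hu hv hu' hv' ru ru' htag
      have e1 : p.1 = p'.1 := idx_inj k hkey.1
      have e2 : p.2 = p'.2 := idx_inj k hkey.2
      exact Prod.ext e1 e2
  calc ((((Q k m ×ˢ (Q k m)ᶜ).filter fun p => treeAdj k p.1 p.2).card : ℕ) : ℝ)
      ≤ (4 : ℕ) := by exact_mod_cast hcard
    _ = 4 := by norm_num

end S16

theorem stmt_16 (k : ℕ) (hk : 2 ≤ k) :
    -- the greedy partition has min-max value k - 1
    (∀ i : Fin (k - 1), cutw (treeW k) (pathPart k i) = 1) ∧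
    cutw (treeW k) (spinePart k) = (k : ℝ) - 1 ∧
    -- whereas there is a balanced partition into k parts of size k
    -- whose min-max value is at most 4
    (∃ Q : Fin k → Finset (TreeV k),
      (∀ i j, i ≠ j → Disjoint (Q i) (Q j)) ∧
      Finset.univ.biUnion Q = Finset.univ ∧
      (∀ i, (Q i).card = k) ∧
      (∀ i, cutw (treeW k) (Q i) ≤ 4)) := by
  refine ⟨fun i => S16.part1 hk i, S16.part2 hk, S16.Q k, ?_, S16.union_Q hk,
    fun m => S16.card_Q hk m, fun m => S16.cut_le hk m⟩
  intro i j hij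
  exact S16.disj_Q i j hij
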